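/- arXiv:2305.01381 — 4 statements merged into one kernel-verified Lean document; each statement's English description precedes it below -/
import Mathlib

section
/- For all real numbers U with 0 < U ≤ 1 and all real numbers x with 0 < x ≤ 1, one has x^(1/U) · (1 - (1-U)·x) ≤ U; equivalently, U / (1 - x·(1-U)) ≥ x^(1/U). -/
theorem stmt_0 (U x : ℝ) (hU0 : 0 < U) (hU1 : U ≤ 1) (hx0 : 0 < x) (hx1 : x ≤ 1) :
    x ^ (1 / U) * (1 - (1 - U) * x) ≤ U ∧ U / (1 - x * (1 - U)) ≥ x ^ (1 / U) := by
  have h1U : (0 : ℝ) < 1 + U := by linarith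
  set y := x ^ (1 / U) with hy
  set z := x ^ ((1 + U) / U) with hz
  have hy0 : 0 < y := Real.rpow_pos_of_pos hx0 _
  have hz0 : 0 < z := Real.rpow_pos_of_pos hx0 _
  have hz1 : z ≤ 1 := Real.rpow_le_one hx0.le hx1 (by positivity)
  have hyz : y * x = z := by
    rw [hy, hz]
    nth_rewrite 2 [show x = x ^ (1 : ℝ) by rw [Real.rpow_one]]
    rw [← Real.rpow_add hx0]
    congr 1
    field_simp
  have hamgm : z ^ (1 / (1 + U)) * (1 : ℝ) ^ (U / (1 + U)) ≤
      (1 / (1 + U)) * z + (U / (1 + U)) * 1 :=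
    Real.geom_mean_le_arith_mean2_weighted (by positivity) (by positivity) hz0.le
      (by norm_num) (by field_simp)
  have hzy : z ^ (1 / (1 + U)) = y := by
    rw [hz, hy, ← Real.rpow_mul hx0.le]
    congr 1
    field_simp
  rw [hzy, Real.one_rpow, mul_one] at hamgm
  have key : y * (1 - (1 - U) * x) ≤ U := by
    have : y * (1 - (1 - U) * x) = y - (1 - U) * (y * x) := by ring
    rw [this, hyz]
    have h2 : y * (1 + U) ≤ z + U := by
      have := mul_le_mul_of_nonneg_right hamgm h1U.le
      field_simp at this
      linarith
    nlinarith [h2, mul_nonneg (mul_nonneg hU0.le hU0.le) (sub_nonneg.mpr hz1)]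
  refine ⟨key, ?_⟩
  have hden : 0 < 1 - x * (1 - U) := by nlinarith
  rw [ge_iff_le, le_div_iff₀ hden]
  nlinarith [key]
end

section
/- For all real numbers γ, U with 0 < γ < 1 and 0 < U < 1, and every real τ ≥ 0, the series ∑_{n=0}^∞ (γ^τ·(1-U))^n · U converges to U / (1 - γ^τ·(1-U)), and this sum satisfies ∑_{n=0}^∞ (γ^τ·(1-U))^n · U ≥ γ^(τ/U). -/
/-!
With `g = γ ^ τ ∈ (0, 1]` the series is geometric with ratio `g (1 - U) < 1`, so it sums to
`U / (1 - g (1 - U))`. Since `γ ^ (τ / U) = g ^ U⁻¹` and `U⁻¹ ≥ 1`, Bernoulli's inequality applied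
to `g⁻¹ = 1 + (g⁻¹ - 1)` gives `g ^ (-U⁻¹) ≥ 1 + (g⁻¹ - 1) / U`, which already dominates
`(1 - g (1 - U)) / U`.
-/

open Real

theorem rpow_inv_le_div_one_sub_mul {g U : ℝ} (hg0 : 0 < g) (hg1 : g ≤ 1) (hU0 : 0 < U)
    (hU1 : U ≤ 1) : g ^ U⁻¹ ≤ U / (1 - g * (1 - U)) := by
  have bernoulli : 1 + U⁻¹ * (g⁻¹ - 1) ≤ (g ^ U⁻¹)⁻¹ := by
    simpa [inv_rpow hg0.le] using
      one_add_mul_self_le_rpow_one_add (s := g⁻¹ - 1) (by linarith [inv_pos.2 hg0])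
        ((one_le_inv₀ hU0).2 hU1)
  have hpos : 0 < 1 + U⁻¹ * (g⁻¹ - 1) := by
    have : 0 ≤ g⁻¹ - 1 := by linarith [(one_le_inv₀ hg0).2 hg1]
    positivity
  have hD : 0 < 1 - g * (1 - U) := by nlinarith
  calc g ^ U⁻¹ ≤ (1 + U⁻¹ * (g⁻¹ - 1))⁻¹ := by simpa using inv_anti₀ hpos bernoulli
    _ ≤ U / (1 - g * (1 - U)) := by
        rw [inv_le_iff_one_le_mul₀' hpos]
        field_simp
        -- the difference of the two sides is `(1 - g) ^ 2 + U g (1 - g)`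
        nlinarith [mul_nonneg hU0.le (mul_nonneg hg0.le (sub_nonneg.2 hg1))]

theorem stmt_1 (γ U τ : ℝ) (hγ0 : 0 < γ) (hγ1 : γ < 1) (hU0 : 0 < U) (hU1 : U < 1)
    (hτ : 0 ≤ τ) :
    HasSum (fun n : ℕ => (γ ^ τ * (1 - U)) ^ n * U) (U / (1 - γ ^ τ * (1 - U))) ∧
    ∑' n : ℕ, (γ ^ τ * (1 - U)) ^ n * U ≥ γ ^ (τ / U) := by
  have hg0 : 0 < γ ^ τ := rpow_pos_of_pos hγ0 τ
  have hg1 : γ ^ τ ≤ 1 := rpow_le_one hγ0.le hγ1.le hτ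
  have hsum : HasSum (fun n : ℕ => (γ ^ τ * (1 - U)) ^ n * U) (U / (1 - γ ^ τ * (1 - U))) := by
    simpa [div_eq_inv_mul] using
      (hasSum_geometric_of_lt_one (by nlinarith) (by nlinarith)).mul_right U
  refine ⟨hsum, ?_⟩
  rw [hsum.tsum_eq, ge_iff_le, div_eq_mul_inv τ U, rpow_mul hγ0.le]
  exact rpow_inv_le_div_one_sub_mul hg0 hg1 hU0 hU1.le
end

section
/- Let U be a real number with 0 ≤ U ≤ 1 and let R : ℕ → ℝ satisfy 0 ≤ R n ≤ U for all n. Then for every natural number C, ∑_{n=0}^{C-1} (∏_{j=0}^{n-1} (1 - R j)) · R n ≤ ∑_{n=0}^{C-1} (1-U)^n · U = 1 - (1-U)^C. -/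
theorem stmt_3 (U : ℝ) (hU0 : 0 ≤ U) (hU1 : U ≤ 1) (R : ℕ → ℝ)
    (hR : ∀ n, 0 ≤ R n ∧ R n ≤ U) (C : ℕ) :
    ∑ n ∈ Finset.range C, (∏ j ∈ Finset.range n, (1 - R j)) * R n ≤
      ∑ n ∈ Finset.range C, (1 - U) ^ n * U ∧
    ∑ n ∈ Finset.range C, (1 - U) ^ n * U = 1 - (1 - U) ^ C := by
  have hgeom : ∑ n ∈ Finset.range C, (1 - U) ^ n * U = 1 - (1 - U) ^ C := by
    have := Finset.sum_range_sub' (fun n => (1 - U) ^ n) C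
    simp only [pow_zero] at this
    rw [← this]
    apply Finset.sum_congr rfl
    intro n _
    ring
  refine ⟨?_, hgeom⟩
  have htel : ∑ n ∈ Finset.range C, (∏ j ∈ Finset.range n, (1 - R j)) * R n
      = 1 - ∏ j ∈ Finset.range C, (1 - R j) := by
    have := Finset.sum_range_sub' (fun n => ∏ j ∈ Finset.range n, (1 - R j)) C
    simp only [Finset.prod_range_zero] at this
    rw [← this]
    apply Finset.sum_congr rfl
    intro n _
    rw [Finset.prod_range_succ]
    ring
  rw [htel, hgeom]
  have : (1 - U) ^ C ≤ ∏ j ∈ Finset.range C, (1 - R j) := by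
    calc (1 - U) ^ C = ∏ _j ∈ Finset.range C, (1 - U) := by
          rw [Finset.prod_const, Finset.card_range]
      _ ≤ _ := Finset.prod_le_prod ?_ ?_
    · intro i _; linarith
    · intro i _; linarith [(hR i).2]
  linarith
end

section
/- Let Π be a nonempty finite type, let p : Π → ℝ satisfy 0 ≤ p π ≤ 1 for all π, and let A, B, C be nonnegative real numbers. Then there exist real numbers U ∈ (0,1) and γ ∈ (0,1) such that for every function G : Π → ℝ satisfying, for all π ∈ Π, γ^(A + B/U) · p π ≤ G π ≤ 1 - (1-U)^C + p π · (1-U)^C, every element π₀ ∈ Π that maximizes G over Π also maximizes p over Π. -/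
lemma aux_rpow (s d : ℝ) (hs0 : 0 < s) (hs1 : s < 1) (hd : 0 ≤ d) :
    ∃ x ∈ Set.Ioo (0:ℝ) 1, s < x ^ d := by
  set s' : ℝ := (s + 1) / 2 with hs'
  have hs'0 : 0 < s' := by positivity
  have hs'1 : s' < 1 := by rw [hs']; linarith
  have hss' : s < s' := by rw [hs']; linarith
  have hde : (0:ℝ) < d + 1 := by linarith
  set x : ℝ := s' ^ (1 / (d + 1)) with hx
  have hx0 : 0 < x := Real.rpow_pos_of_pos hs'0 _
  have hx1 : x < 1 := Real.rpow_lt_one hs'0.le hs'1 (by positivity)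
  refine ⟨x, ⟨hx0, hx1⟩, ?_⟩
  have h1 : x ^ (d + 1) = s' := by
    rw [hx, ← Real.rpow_mul hs'0.le, one_div_mul_cancel hde.ne', Real.rpow_one]
  calc s < s' := hss'
    _ = x ^ (d + 1) := h1.symm
    _ ≤ x ^ d := Real.rpow_le_rpow_of_exponent_ge hx0 hx1.le (by linarith)

theorem stmt_7 (Pol : Type*) [Fintype Pol] [Nonempty Pol] (p : Pol → ℝ)
    (hp : ∀ π, 0 ≤ p π ∧ p π ≤ 1) (A B C : ℝ) (hA : 0 ≤ A) (hB : 0 ≤ B) (hC : 0 ≤ C) :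
    ∃ U ∈ Set.Ioo (0 : ℝ) 1, ∃ γ ∈ Set.Ioo (0 : ℝ) 1,
      ∀ G : Pol → ℝ,
        (∀ π, γ ^ (A + B / U) * p π ≤ G π ∧
              G π ≤ 1 - (1 - U) ^ C + p π * (1 - U) ^ C) →
        ∀ π₀ : Pol, (∀ π, G π ≤ G π₀) → (∀ π, p π ≤ p π₀) := by
  have hne : (Finset.univ : Finset Pol).Nonempty := Finset.univ_nonempty
  set M : ℝ := Finset.univ.sup' hne p with hM
  have hle : ∀ π, p π ≤ M := fun π => Finset.le_sup' p (Finset.mem_univ π)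
  obtain ⟨πs, -, hπs⟩ := Finset.exists_mem_eq_sup' hne p
  by_cases hex : ∃ π, p π < M
  · -- nontrivial case
    have hSne : (Finset.univ.filter (fun π => p π < M)).Nonempty := by
      obtain ⟨π, hπ⟩ := hex
      exact ⟨π, Finset.mem_filter.mpr ⟨Finset.mem_univ π, hπ⟩⟩
    set m : ℝ := (Finset.univ.filter (fun π => p π < M)).sup' hSne p with hm
    have hmM : m < M := by
      rw [hm, Finset.sup'_lt_iff]
      intro π hπ
      exact (Finset.mem_filter.mp hπ).2
    have hmub : ∀ π, p π < M → p π ≤ m := fun π h =>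
      Finset.le_sup' p (Finset.mem_filter.mpr ⟨Finset.mem_univ π, h⟩)
    obtain ⟨πw, hπwS⟩ := hSne
    have h0m : 0 ≤ m := le_trans (hp πw).1 (hmub πw (Finset.mem_filter.mp hπwS).2)
    have hpsM : p πs = M := (hM.trans hπs).symm
    have hM1 : M ≤ 1 := hpsM ▸ (hp πs).2
    have hM0 : 0 < M := lt_of_le_of_lt h0m hmM
    have hm1 : m < 1 := lt_of_lt_of_le hmM hM1
    set mid : ℝ := (m + M) / 2 with hmid
    have hmid1 : mid < 1 := by rw [hmid]; linarith
    have hmmid : m < mid := by rw [hmid]; linarith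
    have hmidM : mid < M := by rw [hmid]; linarith
    have hmid0 : 0 < mid := lt_of_le_of_lt h0m hmmid
    -- choose U
    set s : ℝ := (1 - mid) / (1 - m) with hs
    have hs0 : 0 < s := div_pos (by linarith) (by linarith)
    have hs1 : s < 1 := (div_lt_one (by linarith)).mpr (by linarith)
    obtain ⟨x, ⟨hx0, hx1⟩, hxs⟩ := aux_rpow s C hs0 hs1 hC
    set U : ℝ := 1 - x with hU
    have hU0 : 0 < U := by rw [hU]; linarith
    have hU1 : U < 1 := by rw [hU]; linarith
    have h1U : (1 : ℝ) - U = x := by rw [hU]; ring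
    -- key bound: 1 - (1-U)^C + m * (1-U)^C < mid
    have hub : 1 - (1 - U) ^ C + m * (1 - U) ^ C < mid := by
      rw [h1U]
      have h2 : (1 - mid) / (1 - m) < x ^ C := hxs
      have h3 : 1 - mid < x ^ C * (1 - m) := by
        rwa [div_lt_iff₀ (by linarith : (0:ℝ) < 1 - m)] at h2
      nlinarith
    -- choose γ
    set t : ℝ := mid / M with ht
    have ht0 : 0 < t := div_pos hmid0 hM0
    have ht1 : t < 1 := (div_lt_one hM0).mpr hmidM
    have heU : 0 ≤ A + B / U := by positivity
    obtain ⟨γ, ⟨hγ0, hγ1⟩, hγt⟩ := aux_rpow t (A + B / U) ht0 ht1 heU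
    have hlb : mid < γ ^ (A + B / U) * M := by
      have := (div_lt_iff₀ hM0).mp hγt
      linarith [this]
    refine ⟨U, ⟨hU0, hU1⟩, γ, ⟨hγ0, hγ1⟩, ?_⟩
    intro G hG π₀ hmax π
    -- show p π₀ = M
    have hGs : mid < G πs := by
      have := (hG πs).1
      rw [hpsM] at this
      linarith
    have hπ₀M : M ≤ p π₀ := by
      by_contra hcon
      push_neg at hcon
      have hpm : p π₀ ≤ m := hmub π₀ hcon
      have hxC0 : 0 < x ^ C := Real.rpow_pos_of_pos hx0 C
      have : G π₀ ≤ 1 - (1 - U) ^ C + m * (1 - U) ^ C := by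
        have h4 := (hG π₀).2
        rw [h1U] at h4 ⊢
        nlinarith
      have := lt_of_le_of_lt this hub
      linarith [hmax πs]
    exact le_trans (hle π) hπ₀M
  · -- p is constant = M
    push_neg at hex
    refine ⟨1/2, by norm_num, 1/2, by norm_num, ?_⟩
    intro G hG π₀ hmax π
    exact le_trans (hle π) (hex π₀)
end
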